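/- Price characterization of the failure preorder (instance of Proposition 1): Let S = (P, Act, →) be a finite labeled transition system and p, q ∈ P. Then failures(p) ⊆ failures(q) if and only if no HML formula φ with expr(φ) ≤ (∞,2,0,0,1,1) distinguishes p from q. -/

import Mathlib

/-! ### Energies and energy updates -/

/-- (Finite) energies: vectors in `ℕ^N`. -/
abbrev Energy (N : ℕ) := Fin N → ℕ

/-- Extended energies: vectors in `(ℕ ∪ {∞})^N`. -/
abbrev EnergyE (N : ℕ) := Fin N → ℕ∞

/-- Embedding of energies into extended energies. -/
def Energy.toE {N : ℕ} (e : Energy N) : EnergyE N := fun k => (e k : ℕ∞)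

/-- A component of an energy update: `-1`, `0`, or `min_D`. -/
inductive UpdComp (N : ℕ) : Type where
  | dec : UpdComp N
  | zero : UpdComp N
  | minOf (D : Finset (Fin N)) : UpdComp N
deriving DecidableEq

/-- An energy update: a vector of update components, where a `min_D`
component at index `k` must satisfy `k ∈ D`. -/
structure EnergyUpdate (N : ℕ) : Type where
  comp : Fin N → UpdComp N
  valid : ∀ k D, comp k = UpdComp.minOf D → k ∈ D

open Classical in
/-- Applying an energy update to an extended energy: component `k` becomes
`e k - 1`, `e k`, or `min_{d ∈ D} e d`; the result is undefined (`none`) if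
some component would become negative. -/
noncomputable def applyUpdE {N : ℕ} (e : EnergyE N) (u : EnergyUpdate N) :
    Option (EnergyE N) :=
  if ∀ k, u.comp k = UpdComp.dec → e k ≠ 0 then
    some (fun k =>
      match u.comp k with
      | UpdComp.dec => e k - 1
      | UpdComp.zero => e k
      | UpdComp.minOf D => (insert k D).inf' (Finset.insert_nonempty k D) e)
  else none

open Classical in
/-- Applying an energy update to a (finite) energy. -/
noncomputable def applyUpdN {N : ℕ} (e : Energy N) (u : EnergyUpdate N) :
    Option (Energy N) :=
  if ∀ k, u.comp k = UpdComp.dec → e k ≠ 0 then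
    some (fun k =>
      match u.comp k with
      | UpdComp.dec => e k - 1
      | UpdComp.zero => e k
      | UpdComp.minOf D => (insert k D).inf' (Finset.insert_nonempty k D) e)
  else none

/-! ### Declining energy games -/

/-- A declining `N`-dimensional energy game: positions (partitioned into defender
positions and attacker positions), moves, and a weight function assigning an
energy update to each move. -/
structure EnergyGame (N : ℕ) where
  Pos : Type
  defender : Pos → Prop
  move : Pos → Pos → Prop
  weight : Pos → Pos → EnergyUpdate N

/-- The attacker wins from position `g` with (extended) initial energy budget `e`:
inductive (attractor) characterization of the existence of an attacker winning
strategy.  (The attacker wins exactly the finite plays that get stuck at a defender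
position without the energy having become negative, so the attacker has a winning
strategy iff they can force the play into a stuck defender position in finitely
many steps while keeping all energy levels defined.) -/
inductive AttackerWins {N : ℕ} (G : EnergyGame N) : G.Pos → EnergyE N → Prop where
  | attack {g g' : G.Pos} {e e' : EnergyE N} :
      ¬ G.defender g → G.move g g' →
      applyUpdE e (G.weight g g') = some e' →
      AttackerWins G g' e' → AttackerWins G g e
  | defend {g : G.Pos} {e : EnergyE N} :
      G.defender g →
      (∀ g', G.move g g' → (applyUpdE e (G.weight g g')).isSome) →
      (∀ g' e', G.move g g' → applyUpdE e (G.weight g g') = some e' →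
        AttackerWins G g' e') →
      AttackerWins G g e
/-! ### The spectroscopy energy game -/

/-- Lifting of transition steps to sets of processes:
`stepSet step Q a = {q' | ∃ q ∈ Q, q →a q'}`. -/
def stepSet {P : Type} {Act : Type} (step : P → Act → P → Prop) (Q : Set P) (a : Act) :
    Set P := {q' | ∃ q ∈ Q, step q a q'}

/-- The actions enabled initially for a process `p`: `I(p)`. -/
def enabledActs {P : Type} {Act : Type} (step : P → Act → P → Prop) (p : P) : Set Act :=
  {a | ∃ p', step p a p'}

/-- Positions of the spectroscopy energy game: attacker positions `[p,Q]_a`,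
attacker clause positions `[p,q]_a^∧`, and defender positions `(p,Q,Q*)_d`. -/
inductive SpecPos (P : Type) : Type where
  | att (p : P) (Q : Set P)
  | attConj (p q : P)
  | defp (p : P) (Q Qs : Set P)

/-- Update `(-1,0,0,0,0,0)` of observation moves. -/
def uObs : EnergyUpdate 6 :=
  ⟨![.dec, .zero, .zero, .zero, .zero, .zero], by decide⟩

/-- Update `(0,-1,0,0,0,0)` of conjunction challenges. -/
def uConj : EnergyUpdate 6 :=
  ⟨![.zero, .dec, .zero, .zero, .zero, .zero], by decide⟩

/-- Update `(min_{1,3},0,0,0,0,0)` of conjunction revivals. -/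
def uRevival : EnergyUpdate 6 :=
  ⟨![.minOf {0, 2}, .zero, .zero, .zero, .zero, .zero], by decide⟩

/-- Update `(0,0,0,min_{3,4},0,0)` of conjunction answers. -/
def uAnswer : EnergyUpdate 6 :=
  ⟨![.zero, .zero, .zero, .minOf {2, 3}, .zero, .zero], by decide⟩

/-- Update `(min_{1,4},0,0,0,0,0)` of positive decisions. -/
def uPos : EnergyUpdate 6 :=
  ⟨![.minOf {0, 3}, .zero, .zero, .zero, .zero, .zero], by decide⟩

/-- Update `(min_{1,5},0,0,0,0,-1)` of negative decisions. -/
def uNeg : EnergyUpdate 6 :=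
  ⟨![.minOf {0, 4}, .zero, .zero, .zero, .zero, .dec], by decide⟩

/-- The moves of the spectroscopy energy game `G△`. -/
inductive SpecMove {P : Type} {Act : Type} (step : P → Act → P → Prop) :
    SpecPos P → SpecPos P → Prop where
  | obs {p p' : P} {Q : Set P} {a : Act} :
      step p a p' →
      SpecMove step (.att p Q) (.att p' (stepSet step Q a))
  | conjChallenge {p : P} {Q Qs : Set P} :
      Qs ⊆ Q →
      SpecMove step (.att p Q) (.defp p (Q \ Qs) Qs)
  | conjRevival {p : P} {Q Qs : Set P} :
      Qs ≠ ∅ →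
      SpecMove step (.defp p Q Qs) (.att p Qs)
  | conjAnswer {p q : P} {Q Qs : Set P} :
      q ∈ Q →
      SpecMove step (.defp p Q Qs) (.attConj p q)
  | posDecision {p q : P} :
      SpecMove step (.attConj p q) (.att p {q})
  | negDecision {p q : P} :
      p ≠ q →
      SpecMove step (.attConj p q) (.att q {p})

/-- The moves of the clever spectroscopy game `G▲`: like `SpecMove`, with conjunction
challenges restricted to the four subsets
`∅`, `{q ∈ Q | I(q) ⊆ I(p)}`, `{q ∈ Q | I(p) ⊆ I(q)}`, `{q ∈ Q | I(p) = I(q)}`. -/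
inductive CleverMove {P : Type} {Act : Type} (step : P → Act → P → Prop) :
    SpecPos P → SpecPos P → Prop where
  | obs {p p' : P} {Q : Set P} {a : Act} :
      step p a p' →
      CleverMove step (.att p Q) (.att p' (stepSet step Q a))
  | conjChallenge {p : P} {Q Qs : Set P} :
      (Qs = ∅ ∨
       Qs = {q ∈ Q | enabledActs step q ⊆ enabledActs step p} ∨
       Qs = {q ∈ Q | enabledActs step p ⊆ enabledActs step q} ∨
       Qs = {q ∈ Q | enabledActs step p = enabledActs step q}) →
      CleverMove step (.att p Q) (.defp p (Q \ Qs) Qs)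
  | conjRevival {p : P} {Q Qs : Set P} :
      Qs ≠ ∅ →
      CleverMove step (.defp p Q Qs) (.att p Qs)
  | conjAnswer {p q : P} {Q Qs : Set P} :
      q ∈ Q →
      CleverMove step (.defp p Q Qs) (.attConj p q)
  | posDecision {p q : P} :
      CleverMove step (.attConj p q) (.att p {q})
  | negDecision {p q : P} :
      p ≠ q →
      CleverMove step (.attConj p q) (.att q {p})

open Classical in
/-- The weight function of the spectroscopy energy game (well-defined on all moves). -/
noncomputable def specWeight {P : Type} : SpecPos P → SpecPos P → EnergyUpdate 6
  | .att _ _, .att _ _ => uObs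
  | .att _ _, .defp _ _ _ => uConj
  | .defp _ _ _, .att _ _ => uRevival
  | .defp _ _ _, .attConj _ _ => uAnswer
  | .attConj p _, .att p' _ => if p = p' then uPos else uNeg
  | _, _ => uObs

/-- The spectroscopy energy game `G△` of a labeled transition system. -/
noncomputable def specGame {P : Type} {Act : Type} (step : P → Act → P → Prop) :
    EnergyGame 6 where
  Pos := SpecPos P
  defender g := ∃ p Q Qs, g = SpecPos.defp p Q Qs
  move := SpecMove step
  weight := specWeight

/-- The clever spectroscopy energy game `G▲` of a labeled transition system. -/
noncomputable def cleverGame {P : Type} {Act : Type} (step : P → Act → P → Prop) :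
    EnergyGame 6 where
  Pos := SpecPos P
  defender g := ∃ p Q Qs, g = SpecPos.defp p Q Qs
  move := CleverMove step
  weight := specWeight
/-! ### Hennessy–Milner logic -/

/-- Hennessy–Milner logic over actions `Act`: observations `⟨a⟩φ` and finite
conjunctions `⋀ {ψ_i}` whose clauses are positive (`poss`) or negated (`negs`)
formulas. -/
inductive HML (Act : Type) : Type where
  | obs (a : Act) (φ : HML Act)
  | conj (poss : List (HML Act)) (negs : List (HML Act))

/-- HML semantics: `HML.sat step φ p` means `p ⊨ φ`. -/
def HML.sat {P : Type} {Act : Type} (step : P → Act → P → Prop) :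
    HML Act → P → Prop
  | .obs a φ, p => ∃ p', step p a p' ∧ HML.sat step φ p'
  | .conj poss negs, p =>
      (∀ φ ∈ poss, HML.sat step φ p) ∧ (∀ φ ∈ negs, ¬ HML.sat step φ p)

/-- `φ` distinguishes `p` from `q`: `p ⊨ φ` and `q ⊭ φ`. -/
def distinguishes {P : Type} {Act : Type} (step : P → Act → P → Prop)
    (φ : HML Act) (p q : P) : Prop :=
  φ.sat step p ∧ ¬ φ.sat step q

/-- Maximum (supremum) of a list of naturals, `0` for the empty list. -/
def listMax (l : List ℕ) : ℕ := l.foldr max 0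

/-- Supremum of a list of naturals after removing one maximal element
(the "other positive clauses" in the pricing). -/
def supErase (l : List ℕ) : ℕ := listMax (l.erase (listMax l))

mutual
/-- The expressiveness price `expr : HML → ℕ^6` of a formula.
Components (0-indexed): 0 — modal depth; 1 — nesting depth of conjunctions;
2 — modal depth of the deepest positive clauses; 3 — modal depth of the other
positive clauses; 4 — modal depth of negative clauses; 5 — nesting depth of
negations. -/
def HML.expr {Act : Type} : HML Act → Energy 6
  | .obs _ φ => fun k => HML.expr φ k + (if k = 0 then 1 else 0)
  | .conj poss negs =>
      let pe := exprList poss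
      let ne := exprList negs
      -- prices of the clauses (a negated clause adds 1 to component 5)
      let clauseE : List (Energy 6) :=
        pe ++ ne.map (fun v => fun k => v k + (if k = 5 then 1 else 0))
      let base : Energy 6 := fun k =>
        if k = 1 then 1 + listMax (clauseE.map (fun v => v 1))
        else if k = 2 then listMax (pe.map (fun v => v 0))
        else if k = 3 then supErase (pe.map (fun v => v 0))
        else if k = 4 then listMax (ne.map (fun v => v 0))
        else 0
      fun k => max (base k) (listMax (clauseE.map (fun v => v k)))

/-- Prices of a list of formulas. -/
def exprList {Act : Type} : List (HML Act) → List (Energy 6)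
  | [] => []
  | φ :: l => HML.expr φ :: exprList l
end

/-- The expressiveness price as an extended energy. -/
def HML.exprE {Act : Type} (φ : HML Act) : EnergyE 6 := (HML.expr φ).toE

/-- Multi-step transitions along a word of actions. -/
inductive StepStar {P Act : Type} (step : P → Act → P → Prop) :
    P → List Act → P → Prop where
  | nil (p : P) : StepStar step p [] p
  | cons {p : P} {a : Act} {p' : P} {w : List Act} {p'' : P} :
      step p a p' → StepStar step p' w p'' → StepStar step p (a :: w) p''

/-- The traces of a process. -/
def traces {P Act : Type} (step : P → Act → P → Prop) (p : P) : Set (List Act) :=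
  {w | ∃ p', StepStar step p w p'}

/-- The failures of a process: pairs `(σ, X)` such that some `p'` with `p →σ p'`
has `I(p') ∩ X = ∅`. -/
def failures {P Act : Type} (step : P → Act → P → Prop) (p : P) :
    Set (List Act × Set Act) :=
  {σX | ∃ p', StepStar step p σX.1 p' ∧ enabledActs step p' ∩ σX.2 = ∅}


section FailureAux
variable {P Act : Type}

section FailureAux
variable {P Act : Type}

lemma listMax_cons (a : ℕ) (l : List ℕ) : listMax (a :: l) = max a (listMax l) := rfl

lemma le_listMax_of_mem {a : ℕ} {l : List ℕ} (h : a ∈ l) : a ≤ listMax l := by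
  induction l with
  | nil => simp at h
  | cons b t ih =>
    rw [listMax_cons]
    rcases List.mem_cons.1 h with h | h
    · exact h ▸ le_max_left _ _
    · exact le_trans (ih h) (le_max_right _ _)

lemma listMax_le {l : List ℕ} {n : ℕ} (h : ∀ a ∈ l, a ≤ n) : listMax l ≤ n := by
  induction l with
  | nil => simp [listMax]
  | cons b t ih =>
    rw [listMax_cons]
    exact max_le (h b (by simp)) (ih fun a ha => h a (by simp [ha]))

lemma exprList_eq (l : List (HML Act)) : exprList l = l.map HML.expr := by
  induction l with
  | nil => simp [exprList]
  | cons φ t ih => simp [exprList, ih]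

/-- The clause price list of a conjunction. -/
def clauseList (poss negs : List (HML Act)) : List (Energy 6) :=
  poss.map HML.expr ++ (negs.map HML.expr).map (fun v k => v k + (if k = 5 then 1 else 0))

lemma expr_obs (a : Act) (φ : HML Act) (k : Fin 6) :
    (HML.obs a φ).expr k = φ.expr k + (if k = 0 then 1 else 0) := by
  simp [HML.expr]

lemma expr_conj_apply (poss negs : List (HML Act)) (k : Fin 6) :
    (HML.conj poss negs).expr k =
      max (if k = 1 then 1 + listMax ((clauseList poss negs).map (fun v => v 1))
        else if k = 2 then listMax ((poss.map HML.expr).map (fun v => v 0))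
        else if k = 3 then supErase ((poss.map HML.expr).map (fun v => v 0))
        else if k = 4 then listMax ((negs.map HML.expr).map (fun v => v 0))
        else 0)
      (listMax ((clauseList poss negs).map (fun v => v k))) := by
  simp [HML.expr, exprList_eq, clauseList]

lemma clause_mem_pos {poss negs : List (HML Act)} {ψ : HML Act} (h : ψ ∈ poss) :
    HML.expr ψ ∈ clauseList poss negs :=
  List.mem_append_left _ (List.mem_map_of_mem h)

lemma clause_mem_neg {poss negs : List (HML Act)} {ψ : HML Act} (h : ψ ∈ negs) :
    (fun k => HML.expr ψ k + (if k = 5 then 1 else 0)) ∈ clauseList poss negs :=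
  List.mem_append_right _ (List.mem_map_of_mem (List.mem_map_of_mem h))

lemma expr_one_clause_pos {poss negs : List (HML Act)} {ψ : HML Act} (h : ψ ∈ poss) :
    1 + ψ.expr 1 ≤ (HML.conj poss negs).expr 1 := by
  rw [expr_conj_apply]
  refine le_max_of_le_left ?_
  rw [if_pos rfl]
  have hm : ψ.expr 1 ∈ (clauseList poss negs).map (fun v => v 1) :=
    List.mem_map.mpr ⟨HML.expr ψ, clause_mem_pos h, rfl⟩
  exact Nat.add_le_add_left (le_listMax_of_mem hm) 1

lemma expr_one_clause_neg {poss negs : List (HML Act)} {ψ : HML Act} (h : ψ ∈ negs) :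
    1 + ψ.expr 1 ≤ (HML.conj poss negs).expr 1 := by
  rw [expr_conj_apply]
  refine le_max_of_le_left ?_
  rw [if_pos rfl]
  have hm : ψ.expr 1 ∈ (clauseList poss negs).map (fun v => v 1) :=
    List.mem_map.mpr ⟨_, clause_mem_neg h, by simp⟩
  exact Nat.add_le_add_left (le_listMax_of_mem hm) 1

lemma expr_zero_pos {poss negs : List (HML Act)} {ψ : HML Act} (h : ψ ∈ poss) :
    ψ.expr 0 ≤ (HML.conj poss negs).expr 2 := by
  rw [expr_conj_apply]
  refine le_max_of_le_left ?_
  rw [if_neg (by decide : ¬ ((2:Fin 6) = 1)), if_pos rfl]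
  exact le_listMax_of_mem (List.mem_map.mpr ⟨_, List.mem_map_of_mem h, rfl⟩)

lemma expr_zero_neg {poss negs : List (HML Act)} {ψ : HML Act} (h : ψ ∈ negs) :
    ψ.expr 0 ≤ (HML.conj poss negs).expr 4 := by
  rw [expr_conj_apply]
  refine le_max_of_le_left ?_
  rw [if_neg (by decide : ¬ ((4:Fin 6) = 1)), if_neg (by decide : ¬ ((4:Fin 6) = 2)),
    if_neg (by decide : ¬ ((4:Fin 6) = 3)), if_pos rfl]
  exact le_listMax_of_mem (List.mem_map.mpr ⟨_, List.mem_map_of_mem h, rfl⟩)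

lemma one_le_expr_one : ∀ (φ : HML Act), 1 ≤ φ.expr 1
  | .obs a φ => by
      rw [expr_obs]
      simpa using one_le_expr_one φ
  | .conj poss negs => by
      rw [expr_conj_apply, if_pos rfl]
      exact le_max_of_le_left (Nat.le_add_right 1 _)
lemma sat_obs (step : P → Act → P → Prop) (a : Act) (φ : HML Act) (r : P) :
    HML.sat step (HML.obs a φ) r ↔ ∃ r', step r a r' ∧ HML.sat step φ r' := by
  rw [HML.sat]

lemma sat_conj (step : P → Act → P → Prop) (poss negs : List (HML Act)) (r : P) :
    HML.sat step (HML.conj poss negs) r ↔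
      (∀ φ ∈ poss, HML.sat step φ r) ∧ (∀ φ ∈ negs, ¬ HML.sat step φ r) := by
  rw [HML.sat]

lemma eq_top_of_expr (φ : HML Act) (h1 : φ.expr 1 ≤ 1) (h0 : φ.expr 0 = 0) :
    φ = .conj [] [] := by
  cases φ with
  | obs a ψ =>
      rw [expr_obs, if_pos rfl] at h0
      omega
  | conj poss negs =>
      have hp : poss = [] := by
        rcases poss with _ | ⟨ψ, t⟩
        · rfl
        · have := expr_one_clause_pos (poss := ψ :: t) (negs := negs) (ψ := ψ) (List.mem_cons_self)
          have := one_le_expr_one ψ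
          omega
      have hn : negs = [] := by
        rcases negs with _ | ⟨ψ, t⟩
        · rfl
        · have := expr_one_clause_neg (poss := poss) (negs := ψ :: t) (ψ := ψ) (List.mem_cons_self)
          have := one_le_expr_one ψ
          omega
      rw [hp, hn]

lemma expr_top (k : Fin 6) : (HML.conj [] [] : HML Act).expr k = if k = 1 then 1 else 0 := by
  rw [expr_conj_apply]
  simp [clauseList, listMax, supErase]

lemma expr_obsTop (a : Act) (k : Fin 6) :
    (HML.obs a (.conj [] []) : HML Act).expr k =
      if k = 0 then 1 else if k = 1 then 1 else 0 := by
  rw [expr_obs, expr_top]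
  rcases eq_or_ne k 0 with rfl | hk
  · simp
  · rw [if_neg hk, if_neg hk, add_zero]

lemma shape_of_expr (φ : HML Act) (h1 : φ.expr 1 ≤ 1) (h0 : φ.expr 0 ≤ 1) :
    φ = .conj [] [] ∨ ∃ a : Act, φ = .obs a (.conj [] []) := by
  cases φ with
  | obs a ψ =>
      right
      refine ⟨a, ?_⟩
      rw [expr_obs, if_pos rfl] at h0
      rw [expr_obs, if_neg (by decide : ¬((1:Fin 6) = 0)), add_zero] at h1
      rw [eq_top_of_expr ψ h1 (by omega)]
  | conj poss negs =>
      left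
      have hp : poss = [] := by
        rcases poss with _ | ⟨ψ, t⟩
        · rfl
        · have := expr_one_clause_pos (poss := ψ :: t) (negs := negs) (ψ := ψ) (List.mem_cons_self)
          have := one_le_expr_one ψ
          omega
      have hn : negs = [] := by
        rcases negs with _ | ⟨ψ, t⟩
        · rfl
        · have := expr_one_clause_neg (poss := poss) (negs := ψ :: t) (ψ := ψ) (List.mem_cons_self)
          have := one_le_expr_one ψ
          omega
      rw [hp, hn]

lemma sat_top (step : P → Act → P → Prop) (r : P) : (HML.conj [] [] : HML Act).sat step r := by
  rw [sat_conj]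
  simp

/-- The failure formula `⟨σ⟩⋀{¬⟨a⟩⊤ | a ∈ X}`. -/
def failFormula (σ X : List Act) : HML Act :=
  σ.foldr HML.obs (.conj [] (X.map fun a => .obs a (.conj [] [])))

lemma stepStar_cons_iff (step : P → Act → P → Prop) (r : P) (a : Act) (σ : List Act) (r' : P) :
    StepStar step r (a :: σ) r' ↔ ∃ r₁, step r a r₁ ∧ StepStar step r₁ σ r' := by
  constructor
  · rintro (_ | ⟨h1, h2⟩)
    exact ⟨_, h1, h2⟩
  · rintro ⟨r₁, h1, h2⟩
    exact .cons h1 h2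

lemma stepStar_nil_iff (step : P → Act → P → Prop) (r r' : P) :
    StepStar step r [] r' ↔ r' = r := by
  constructor
  · rintro (_ | _); rfl
  · rintro rfl; exact .nil _

lemma sat_failFormula (step : P → Act → P → Prop) (σ X : List Act) (r : P) :
    (failFormula σ X).sat step r ↔
      ∃ r', StepStar step r σ r' ∧ ∀ a ∈ X, ¬ ∃ r'', step r' a r'' := by
  induction σ generalizing r with
  | nil =>
      show (HML.conj [] (X.map fun a => .obs a (.conj [] []))).sat step r ↔ _
      rw [sat_conj]
      constructor
      · rintro ⟨-, h⟩
        refine ⟨r, .nil r, fun a ha hex => ?_⟩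
        obtain ⟨r'', hst⟩ := hex
        exact h _ (List.mem_map_of_mem ha) ((sat_obs step a _ r).mpr ⟨r'', hst, sat_top step r''⟩)
      · rintro ⟨r', hst, h⟩
        rw [stepStar_nil_iff] at hst
        subst hst
        refine ⟨by simp, ?_⟩
        rintro φ hφ hsat
        obtain ⟨a, ha, rfl⟩ := List.mem_map.mp hφ
        obtain ⟨r'', hst, -⟩ := (sat_obs step a _ r').mp hsat
        exact h a ha ⟨r'', hst⟩
  | cons a σ ih =>
      show (HML.obs a (failFormula σ X)).sat step r ↔ _
      rw [sat_obs]
      constructor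
      · rintro ⟨r₁, hst, hsat⟩
        obtain ⟨r', h1, h2⟩ := (ih r₁).mp hsat
        exact ⟨r', .cons hst h1, h2⟩
      · rintro ⟨r', hst, h⟩
        obtain ⟨r₁, h1, h2⟩ := (stepStar_cons_iff step r a σ r').mp hst
        exact ⟨r₁, h1, (ih r₁).mpr ⟨r', h2, h⟩⟩
/-- The finite part of the bound `(∞,2,0,0,1,1)`. -/
def failBnd : Fin 6 → ℕ := fun k => if k = 1 then 2 else if k = 4 then 1 else if k = 5 then 1 else 0

lemma expr_failFormula_le (σ X : List Act) (k : Fin 6) (hk : k ≠ 0) :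
    (failFormula σ X : HML Act).expr k ≤ failBnd k := by
  induction σ with
  | cons a σ ih =>
      show (HML.obs a (failFormula σ X)).expr k ≤ _
      rw [expr_obs, if_neg hk, add_zero]
      exact ih
  | nil =>
      show (HML.conj [] (X.map fun a => .obs a (.conj [] []))).expr k ≤ _
      rw [expr_conj_apply]
      have hcl : ∀ (j : Fin 6), ∀ n ∈ (clauseList [] (X.map fun a => HML.obs a (.conj [] []))).map
            (fun v => v j),
          n = (if j = 0 then 1 else if j = 1 then 1 else 0) + (if j = 5 then 1 else 0) := by
        intro j n hn
        simp only [clauseList, List.map_map, List.map_nil, List.nil_append, List.mem_map] at hn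
        obtain ⟨a, -, rfl⟩ := hn
        simp [Function.comp, expr_obsTop]
      have hclb : ∀ (j : Fin 6),
          listMax ((clauseList [] (X.map fun a => HML.obs a (.conj [] []))).map (fun v => v j)) ≤
            (if j = 0 then 1 else if j = 1 then 1 else 0) + (if j = 5 then 1 else 0) := by
        intro j
        exact listMax_le fun n hn => le_of_eq (hcl j n hn)
      have hkb : ∀ j : Fin 6, j ≠ 0 →
          ((if j = 0 then 1 else if j = 1 then 1 else 0) + (if j = 5 then 1 else 0) : ℕ)
            ≤ failBnd j := by decide
      refine max_le ?_ (le_trans (hclb k) (hkb k hk))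
      by_cases h1 : k = 1
      · subst h1
        rw [if_pos rfl]
        have h := hclb 1
        have he : ((if (1:Fin 6) = 0 then 1 else if (1:Fin 6) = 1 then 1 else 0)
            + (if (1:Fin 6) = 5 then 1 else 0) : ℕ) = 1 := by decide
        rw [he] at h
        have hf : failBnd 1 = 2 := by decide
        rw [hf]
        exact le_trans (Nat.add_le_add_left h 1) (by norm_num)
      rw [if_neg h1]
      by_cases h2 : k = 2
      · subst h2; rw [if_pos rfl]; simp [listMax]
      rw [if_neg h2]
      by_cases h3 : k = 3
      · subst h3; rw [if_pos rfl]; simp [supErase, listMax]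
      rw [if_neg h3]
      by_cases h4 : k = 4
      · subst h4
        rw [if_pos rfl]
        refine le_trans (listMax_le (n := 1) fun n hn => ?_) (by decide)
        simp only [List.map_map, List.mem_map] at hn
        obtain ⟨a, -, rfl⟩ := hn
        simp [expr_obsTop]
      rw [if_neg h4]
      exact Nat.zero_le _
lemma negs_extract (step : P → Act → P → Prop) :
    ∀ (negs : List (HML Act)), (∀ ψ ∈ negs, ∃ a : Act, ψ = .obs a (.conj [] [])) →
      ∃ X : List Act, ∀ r, ((∀ ψ ∈ negs, ¬ ψ.sat step r) ↔ ∀ a ∈ X, ¬ ∃ r', step r a r')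
  | [], _ => ⟨[], by simp⟩
  | ψ :: t, h => by
      obtain ⟨a, rfl⟩ := h ψ (List.mem_cons_self)
      obtain ⟨X, hX⟩ := negs_extract step t (fun ψ hψ => h ψ (List.mem_cons_of_mem _ hψ))
      refine ⟨a :: X, fun r => ?_⟩
      constructor
      · rintro hall b hb ⟨r', hst⟩
        rcases List.mem_cons.1 hb with rfl | hb
        · exact hall _ (List.mem_cons_self)
            ((sat_obs step b _ r).mpr ⟨r', hst, sat_top step r'⟩)
        · exact (hX r).mp (fun ψ hψ => hall ψ (List.mem_cons_of_mem _ hψ)) b hb ⟨r', hst⟩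
      · rintro hall ψ' hψ' hsat
        rcases List.mem_cons.1 hψ' with rfl | hψ'
        · obtain ⟨r', hst, -⟩ := (sat_obs step a _ r).mp hsat
          exact hall a (List.mem_cons_self) ⟨r', hst⟩
        · exact (hX r).mpr (fun b hb => hall b (List.mem_cons_of_mem _ hb)) ψ' hψ' hsat

lemma main_shape (step : P → Act → P → Prop) :
    ∀ (φ : HML Act), (∀ k : Fin 6, k ≠ 0 → φ.expr k ≤ failBnd k) →
      (∀ r, ¬ φ.sat step r) ∨
        ∃ σ X : List Act, ∀ r, (φ.sat step r ↔ (failFormula σ X).sat step r)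
  | .obs a φ, h => by
      have h' : ∀ k : Fin 6, k ≠ 0 → φ.expr k ≤ failBnd k := by
        intro k hk
        have := h k hk
        rwa [expr_obs, if_neg hk, add_zero] at this
      rcases main_shape step φ h' with h1 | ⟨σ, X, h1⟩
      · left
        intro r hr
        obtain ⟨r', -, hs⟩ := (sat_obs step a φ r).mp hr
        exact h1 r' hs
      · right
        refine ⟨a :: σ, X, fun r => ?_⟩
        rw [sat_obs]
        show _ ↔ (HML.obs a (failFormula σ X)).sat step r
        rw [sat_obs]
        exact exists_congr fun r₁ => and_congr_right fun _ => h1 r₁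
  | .conj poss negs, h => by
      have h1 := h 1 (by decide)
      have h2 := h 2 (by decide)
      have h4 := h 4 (by decide)
      rw [show failBnd 1 = 2 from rfl] at h1
      rw [show failBnd 2 = 0 from rfl] at h2
      rw [show failBnd 4 = 1 from rfl] at h4
      have hpos : ∀ ψ ∈ poss, ψ = HML.conj [] [] := by
        intro ψ hψ
        have ha := expr_one_clause_pos (negs := negs) hψ
        have hb := expr_zero_pos (negs := negs) hψ
        exact eq_top_of_expr ψ (by omega) (by omega)
      have hneg : ∀ ψ ∈ negs, ψ = HML.conj [] [] ∨ ∃ a : Act, ψ = .obs a (.conj [] []) := by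
        intro ψ hψ
        have ha := expr_one_clause_neg (poss := poss) hψ
        have hb := expr_zero_neg (poss := poss) hψ
        exact shape_of_expr ψ (by omega) (by omega)
      by_cases htop : ∃ ψ ∈ negs, ψ = HML.conj [] []
      · left
        rintro r hr
        obtain ⟨-, hneg'⟩ := (sat_conj step poss negs r).mp hr
        obtain ⟨ψ, hψ, rfl⟩ := htop
        exact hneg' _ hψ (sat_top step r)
      · have hneg' : ∀ ψ ∈ negs, ∃ a : Act, ψ = .obs a (.conj [] []) := by
          intro ψ hψ
          rcases hneg ψ hψ with h' | h'
          · exact absurd ⟨ψ, hψ, h'⟩ htop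
          · exact h'
        obtain ⟨X, hX⟩ := negs_extract step negs hneg'
        right
        refine ⟨[], X, fun r => ?_⟩
        rw [sat_conj, sat_failFormula]
        constructor
        · rintro ⟨-, hn⟩
          exact ⟨r, .nil r, (hX r).mp hn⟩
        · rintro ⟨r', hst, hn⟩
          rw [stepStar_nil_iff] at hst
          subst hst
          exact ⟨fun ψ hψ => (hpos ψ hψ) ▸ sat_top step _, (hX _).mpr hn⟩

lemma failFormula_sat_iff_mem_failures (step : P → Act → P → Prop) (σ X : List Act)
    (S : Set Act) (hXS : ∀ a, a ∈ X ↔ a ∈ S) (r : P) :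
    (failFormula σ X).sat step r ↔ (σ, S) ∈ failures step r := by
  rw [sat_failFormula]
  simp only [failures, Set.mem_setOf_eq]
  refine exists_congr fun r' => and_congr_right fun _ => ?_
  rw [Set.eq_empty_iff_forall_notMem]
  constructor
  · rintro h a ⟨he, hs⟩
    obtain ⟨r'', hst⟩ := he
    exact h a ((hXS a).mpr hs) ⟨r'', hst⟩
  · rintro h a ha ⟨r'', hst⟩
    exact h a ⟨⟨r'', hst⟩, (hXS a).mp ha⟩
lemma bound_iff (e : Energy 6) :
    e.toE ≤ (![⊤, 2, 0, 0, 1, 1] : EnergyE 6) ↔ ∀ k : Fin 6, k ≠ 0 → e k ≤ failBnd k := by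
  constructor
  · intro h k hk
    fin_cases k
    · exact absurd rfl hk
    · have := h 1
      rw [show (![⊤, 2, 0, 0, 1, 1] : EnergyE 6) 1 = ((2 : ℕ) : ℕ∞) from rfl] at this
      simp only [Energy.toE] at this
      show e 1 ≤ 2
      exact_mod_cast this
    · have := h 2
      rw [show (![⊤, 2, 0, 0, 1, 1] : EnergyE 6) 2 = ((0 : ℕ) : ℕ∞) from rfl] at this
      simp only [Energy.toE] at this
      show e 2 ≤ 0
      exact_mod_cast this
    · have := h 3
      rw [show (![⊤, 2, 0, 0, 1, 1] : EnergyE 6) 3 = ((0 : ℕ) : ℕ∞) from rfl] at this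
      simp only [Energy.toE] at this
      show e 3 ≤ 0
      exact_mod_cast this
    · have := h 4
      rw [show (![⊤, 2, 0, 0, 1, 1] : EnergyE 6) 4 = ((1 : ℕ) : ℕ∞) from rfl] at this
      simp only [Energy.toE] at this
      show e 4 ≤ 1
      exact_mod_cast this
    · have := h 5
      rw [show (![⊤, 2, 0, 0, 1, 1] : EnergyE 6) 5 = ((1 : ℕ) : ℕ∞) from rfl] at this
      simp only [Energy.toE] at this
      show e 5 ≤ 1
      exact_mod_cast this
  · intro h k
    fin_cases k
    · exact le_top
    · show ((e 1 : ℕ) : ℕ∞) ≤ ((2 : ℕ) : ℕ∞)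
      exact_mod_cast h 1 (by decide)
    · show ((e 2 : ℕ) : ℕ∞) ≤ ((0 : ℕ) : ℕ∞)
      exact_mod_cast h 2 (by decide)
    · show ((e 3 : ℕ) : ℕ∞) ≤ ((0 : ℕ) : ℕ∞)
      exact_mod_cast h 3 (by decide)
    · show ((e 4 : ℕ) : ℕ∞) ≤ ((1 : ℕ) : ℕ∞)
      exact_mod_cast h 4 (by decide)
    · show ((e 5 : ℕ) : ℕ∞) ≤ ((1 : ℕ) : ℕ∞)
      exact_mod_cast h 5 (by decide)

end FailureAux

/-- **Price characterization of the failure preorder** (instance of Proposition 1):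
`failures(p) ⊆ failures(q)` iff no formula of price `≤ (∞,2,0,0,1,1)` distinguishes
`p` from `q`. -/
theorem failure_price_characterization {P Act : Type} [Fintype P] [Fintype Act]
    (step : P → Act → P → Prop) (p q : P) :
    failures step p ⊆ failures step q ↔
      ¬ ∃ φ : HML Act,
        φ.exprE ≤ (![⊤, 2, 0, 0, 1, 1] : EnergyE 6) ∧ distinguishes step φ p q := by

  classical
  constructor
  · rintro hsub ⟨φ, hφ, hsatp, hnsatq⟩
    have hb := (bound_iff φ.expr).mp hφ
    rcases main_shape step φ hb with hun | ⟨σ, X, hiff⟩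
    · exact hun p hsatp
    · have hp : (σ, {a | a ∈ X}) ∈ failures step p :=
        (failFormula_sat_iff_mem_failures step σ X _ (fun a => Iff.rfl) p).mp ((hiff p).mp hsatp)
      have hq := hsub hp
      exact hnsatq ((hiff q).mpr
        ((failFormula_sat_iff_mem_failures step σ X _ (fun a => Iff.rfl) q).mpr hq))
  · intro hno σS hmem
    by_contra hq
    obtain ⟨σ, S⟩ := σS
    set X : List Act := (Finset.univ.filter (fun a => a ∈ S)).toList with hXdef
    have hXS : ∀ a, a ∈ X ↔ a ∈ S := by
      intro a
      simp [hXdef, Finset.mem_toList]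
    refine hno ⟨failFormula σ X, ?_, ?_, ?_⟩
    · exact (bound_iff _).mpr (fun k hk => expr_failFormula_le σ X k hk)
    · exact (failFormula_sat_iff_mem_failures step σ X S hXS p).mpr hmem
    · intro hs
      exact hq ((failFormula_sat_iff_mem_failures step σ X S hXS q).mp hs)
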